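/- arXiv:1806.03332 — 3 statements merged into one kernel-verified Lean document; each statement's English description precedes it below -/
import Mathlib

section
/- Let 𝒳 be a nonempty finite set, let P be a probability mass function on 𝒳, and let α ∈ (1,∞). Define Q*(x) = P(x)^α / (∑_{x'∈𝒳} P(x')^α) for each x ∈ 𝒳. Then Q* is a probability mass function on 𝒳 and achieves the maximum of Q ↦ ∑_{x∈𝒳} P(x)·Q(x)^{(α−1)/α} over all probability mass functions Q on 𝒳; that is, ∑_{x∈𝒳} P(x)·Q*(x)^{(α−1)/α} = (∑_{x∈𝒳} P(x)^α)^{1/α}. -/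
open Real BigOperators

/-!
The upper bound is Hölder's inequality with the conjugate exponents `α` and `α / (α - 1)`:
`∑ P Q^β ≤ (∑ P^α)^(1/α) (∑ Q)^β` with `β = (α - 1)/α`, and `∑ Q = 1`.
At `Q = P^α / S` with `S = ∑ P^α`, each term `P Q^β` equals `P^α / S^β`,
so the sum is `S^(1 - β) = S^(1/α)` and the bound is attained.
-/

/-- A probability mass function on a finite set: nonnegative and sums to 1. -/
def IsPMF {X : Type} [Fintype X] (P : X → ℝ) : Prop :=
  (∀ x, 0 ≤ P x) ∧ ∑ x, P x = 1

lemma IsPMF.exists_pos {X : Type} [Fintype X] {P : X → ℝ} (hP : IsPMF P) : ∃ x, 0 < P x := by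
  by_contra! h
  have : ∑ x, P x ≤ 0 := Finset.sum_nonpos fun x _ => h x
  linarith [hP.2]

lemma IsPMF.sum_rpow_pos {X : Type} [Fintype X] {P : X → ℝ} (hP : IsPMF P) (α : ℝ) :
    0 < ∑ x, P x ^ α := by
  obtain ⟨x, hx⟩ := hP.exists_pos
  exact Finset.sum_pos' (fun y _ => rpow_nonneg (hP.1 y) α)
    ⟨x, Finset.mem_univ x, rpow_pos_of_pos hx α⟩

lemma isPMF_div_sum {X : Type} [Fintype X] {f : X → ℝ} (hf : ∀ x, 0 ≤ f x)
    (hsum : 0 < ∑ x, f x) : IsPMF fun x => f x / ∑ x', f x' :=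
  ⟨fun x => div_nonneg (hf x) hsum.le, by rw [← Finset.sum_div, div_self hsum.ne']⟩

lemma sum_mul_rpow_le_of_isPMF {X : Type} [Fintype X] {P Q : X → ℝ} (hP : ∀ x, 0 ≤ P x)
    (hQ : IsPMF Q) {α : ℝ} (hα : 1 < α) :
    ∑ x, P x * Q x ^ ((α - 1) / α) ≤ (∑ x, P x ^ α) ^ (1 / α) := by
  have hQ_pow (x : X) : (Q x ^ ((α - 1) / α)) ^ conjExponent α = Q x := by
    rw [conjExponent, ← inv_div, rpow_inv_rpow (hQ.1 x) (div_ne_zero (by linarith) (by linarith))]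
  calc ∑ x, P x * Q x ^ ((α - 1) / α)
      ≤ (∑ x, P x ^ α) ^ (1 / α) *
          (∑ x, (Q x ^ ((α - 1) / α)) ^ conjExponent α) ^ (1 / conjExponent α) :=
        inner_le_Lp_mul_Lq_of_nonneg _ (.conjExponent hα) (fun x _ => hP x)
          fun x _ => rpow_nonneg (hQ.1 x) _
    _ = (∑ x, P x ^ α) ^ (1 / α) := by simp only [hQ_pow, hQ.2, one_rpow, mul_one]

lemma mul_rpow_sub_one {x : ℝ} (hx : 0 ≤ x) {y : ℝ} (hy : y ≠ 0) :
    x * x ^ (y - 1) = x ^ y :=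
  calc x * x ^ (y - 1) = x ^ (1 + (y - 1)) := by rw [rpow_add' hx (by simpa using hy), rpow_one]
    _ = x ^ y := by ring_nf

lemma sum_mul_tilted_rpow {X : Type} [Fintype X] {P : X → ℝ} (hP : ∀ x, 0 ≤ P x) {α : ℝ}
    (hα : α ≠ 0) (hS : 0 < ∑ x, P x ^ α) :
    ∑ x, P x * (P x ^ α / ∑ x', P x' ^ α) ^ ((α - 1) / α) =
      (∑ x, P x ^ α) ^ (1 / α) := by
  set S := ∑ x, P x ^ α
  have hterm (x : X) : P x * (P x ^ α / S) ^ ((α - 1) / α) = P x ^ α / S ^ ((α - 1) / α) := by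
    rw [div_rpow (rpow_nonneg (hP x) α) hS.le, ← rpow_mul (hP x),
      mul_div_cancel₀ _ hα, mul_div_assoc', mul_rpow_sub_one (hP x) hα]
  calc ∑ x, P x * (P x ^ α / S) ^ ((α - 1) / α)
      = S / S ^ ((α - 1) / α) := by simp only [hterm, ← Finset.sum_div, S]
    _ = S ^ (1 - (α - 1) / α) := by rw [rpow_sub hS, rpow_one]
    _ = S ^ (1 / α) := by congr 1; field_simp; ring

theorem tilted_pmf_achieves_max_general {X : Type} [Fintype X]
    (P : X → ℝ) (hP : IsPMF P) (α : ℝ) (hα : 1 < α) :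
    IsPMF (fun x => P x ^ α / ∑ x', P x' ^ α) ∧
    (∀ Q : X → ℝ, IsPMF Q →
      ∑ x, P x * Q x ^ ((α - 1) / α) ≤
        ∑ x, P x * (P x ^ α / ∑ x', P x' ^ α) ^ ((α - 1) / α)) ∧
    ∑ x, P x * (P x ^ α / ∑ x', P x' ^ α) ^ ((α - 1) / α)
      = (∑ x, P x ^ α) ^ (1 / α) := by
  have hS := hP.sum_rpow_pos α
  have hvalue := sum_mul_tilted_rpow hP.1 (by linarith) hS
  refine ⟨isPMF_div_sum (fun x => rpow_nonneg (hP.1 x) α) hS, fun Q hQ => ?_, hvalue⟩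
  rw [hvalue]
  exact sum_mul_rpow_le_of_isPMF hP.1 hQ hα

/-- the α-tilted distribution
`Q*(x) = P(x)^α / ∑ x', P(x')^α` is a pmf, it maximizes
`Q ↦ ∑ x, P x * Q x ^ ((α-1)/α)` over pmfs `Q`, and its value is
`(∑ x, P x ^ α) ^ (1/α)`. -/
theorem tilted_pmf_achieves_max {X : Type} [Fintype X] [Nonempty X]
    (P : X → ℝ) (hP : IsPMF P) (α : ℝ) (hα : 1 < α) :
    IsPMF (fun x => P x ^ α / ∑ x', P x' ^ α) ∧
    (∀ Q : X → ℝ, IsPMF Q →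
      ∑ x, P x * Q x ^ ((α - 1) / α) ≤
        ∑ x, P x * (P x ^ α / ∑ x', P x' ^ α) ^ ((α - 1) / α)) ∧
    ∑ x, P x * (P x ^ α / ∑ x', P x' ^ α) ^ ((α - 1) / α)
      = (∑ x, P x ^ α) ^ (1 / α) :=
  tilted_pmf_achieves_max_general P hP α hα
end

section
/- Let 𝒳 and 𝒴 be nonempty finite sets, let P_{XY} be a joint probability mass function on 𝒳×𝒴 with X-marginal P_X(x) = ∑_y P_{XY}(x,y), and let α ∈ (1,∞). Define the α-leakage L_α(X→Y) = (α/(α−1)) · log [ (max over channels Q from 𝒴 to 𝒳 of ∑_{x,y} P_{XY}(x,y)·Q(x|y)^{(α−1)/α}) / (max over pmfs Q on 𝒳 of ∑_x P_X(x)·Q(x)^{(α−1)/α}) ]. Then L_α(X→Y) = (α/(α−1)) · log [ ∑_{y∈𝒴} (∑_{x∈𝒳} P_{XY}(x,y)^α)^{1/α} / (∑_{x∈𝒳} P_X(x)^α)^{1/α} ], i.e., the α-leakage equals the Arimoto mutual information of order α between X and Y. -/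
/-!
For weights `w ≥ 0` and a pmf `Q`, Hölder's inequality with the conjugate exponents `α` and
`α / (α - 1)` gives `∑ₓ w x * Q x ^ ((α - 1) / α) ≤ ‖w‖_α`, with equality for the escort
distribution `Q ∝ w ^ α`. Hence both maxima in the α-leakage are attained and known in closed
form; for channels the maximisation decouples into one such problem per output `y`.
-/

open Real BigOperators

def IsJointPMF {X Y : Type} [Fintype X] [Fintype Y] (P : X → Y → ℝ) : Prop :=
  (∀ x y, 0 ≤ P x y) ∧ ∑ x, ∑ y, P x y = 1

section
variable {X : Type} [Fintype X] {α : ℝ}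

lemma isPMF_uniform [Nonempty X] : IsPMF (fun _ : X => (Fintype.card X : ℝ)⁻¹) :=
  ⟨fun _ => by positivity, by simp [Finset.sum_const]⟩

lemma IsPMF.sum_mul_rpow_le {w Q : X → ℝ} (hQ : IsPMF Q) (hw : ∀ x, 0 ≤ w x) (hα : 1 < α) :
    ∑ x, w x * Q x ^ ((α - 1) / α) ≤ (∑ x, w x ^ α) ^ (1 / α) := by
  have hexp : (α - 1) / α * (α / (α - 1)) = 1 := by
    have : α - 1 ≠ 0 := by linarith
    field_simp
  have hQ_pow : ∀ x, (Q x ^ ((α - 1) / α)) ^ (α / (α - 1)) = Q x := fun x => by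
    rw [← rpow_mul (hQ.1 x), hexp, rpow_one]
  have hpq : HolderConjugate α (α / (α - 1)) := .conjExponent hα
  have holder := inner_le_Lp_mul_Lq_of_nonneg Finset.univ hpq
    (fun x _ => hw x) (fun x _ => rpow_nonneg (hQ.1 x) ((α - 1) / α))
  simpa only [hQ_pow, hQ.2, one_rpow, mul_one] using holder

lemma sum_mul_escort_rpow {w : X → ℝ} (hw : ∀ x, 0 ≤ w x) (hT : 0 < ∑ x, w x ^ α)
    (hα : 1 < α) :
    ∑ x, w x * (w x ^ α / ∑ x', w x' ^ α) ^ ((α - 1) / α) = (∑ x, w x ^ α) ^ (1 / α) := by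
  set T := ∑ x, w x ^ α
  have hα0 : α ≠ 0 := by positivity
  have hterm : ∀ x, w x * (w x ^ α / T) ^ ((α - 1) / α) = w x ^ α / T ^ ((α - 1) / α) := by
    intro x
    have hsplit : w x ^ α = w x * w x ^ (α - 1) := by
      rw [← rpow_one_add' (hw x) (by simpa using hα0)]
      ring_nf
    rw [div_rpow (rpow_nonneg (hw x) α) hT.le, ← rpow_mul (hw x), mul_div_cancel₀ _ hα0,
      hsplit, mul_div_assoc]
  rw [Finset.sum_congr rfl fun x _ => hterm x, ← Finset.sum_div, div_eq_iff (by positivity),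
    ← rpow_add hT, ← add_div, add_sub_cancel, div_self hα0, rpow_one]

lemma exists_isPMF_sum_mul_rpow_eq [Nonempty X] {w : X → ℝ} (hw : ∀ x, 0 ≤ w x)
    (hα : 1 < α) :
    ∃ Q : X → ℝ, IsPMF Q ∧ ∑ x, w x * Q x ^ ((α - 1) / α) = (∑ x, w x ^ α) ^ (1 / α) := by
  have hα0 : 0 < α := by linarith
  have hT_nonneg : 0 ≤ ∑ x, w x ^ α := Finset.sum_nonneg fun x _ => rpow_nonneg (hw x) α
  rcases hT_nonneg.eq_or_lt with hT | hT
  · have hw0 : ∀ x, w x = 0 := fun x =>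
      (rpow_eq_zero (hw x) hα0.ne').mp <|
        (Finset.sum_eq_zero_iff_of_nonneg fun x _ => rpow_nonneg (hw x) α).mp hT.symm x
          (Finset.mem_univ x)
    refine ⟨_, isPMF_uniform, ?_⟩
    rw [← hT, zero_rpow (by positivity)]
    simp [hw0]
  · refine ⟨fun x => w x ^ α / ∑ x', w x' ^ α,
      ⟨fun x => div_nonneg (rpow_nonneg (hw x) α) hT_nonneg, ?_⟩, sum_mul_escort_rpow hw hT hα⟩
    rw [← Finset.sum_div, div_self hT.ne']

lemma isGreatest_sum_mul_rpow_isPMF [Nonempty X] {w : X → ℝ} (hw : ∀ x, 0 ≤ w x)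
    (hα : 1 < α) :
    IsGreatest {v | ∃ Q : X → ℝ, IsPMF Q ∧ v = ∑ x, w x * Q x ^ ((α - 1) / α)}
      ((∑ x, w x ^ α) ^ (1 / α)) := by
  obtain ⟨Q, hQ, hQ_eq⟩ := exists_isPMF_sum_mul_rpow_eq hw hα
  exact ⟨⟨Q, hQ, hQ_eq.symm⟩, by rintro _ ⟨Q, hQ, rfl⟩; exact hQ.sum_mul_rpow_le hw hα⟩

lemma isGreatest_sum_sum_mul_rpow_channel [Nonempty X] {Y : Type} [Fintype Y]
    {P : X → Y → ℝ} (hP : ∀ x y, 0 ≤ P x y) (hα : 1 < α) :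
    IsGreatest
      {v | ∃ Q : Y → X → ℝ, (∀ y, IsPMF (Q y)) ∧ v = ∑ x, ∑ y, P x y * Q y x ^ ((α - 1) / α)}
      (∑ y, (∑ x, P x y ^ α) ^ (1 / α)) := by
  choose Q hQ hQ_eq using fun y => exists_isPMF_sum_mul_rpow_eq (fun x => hP x y) hα
  refine ⟨⟨Q, hQ, ?_⟩, ?_⟩
  · rw [Finset.sum_comm]
    exact (Finset.sum_congr rfl fun y _ => hQ_eq y).symm
  · rintro _ ⟨Q, hQ, rfl⟩
    rw [Finset.sum_comm]
    exact Finset.sum_le_sum fun y _ => (hQ y).sum_mul_rpow_le (fun x => hP x y) hα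

end

theorem alpha_leakage_eq_arimoto_general {X Y : Type} [Fintype X] [Fintype Y]
    [Nonempty X]
    (P : X → Y → ℝ) (hP : IsJointPMF P) (α : ℝ) (hα : 1 < α) :
    (α / (α - 1)) * Real.log
      (sSup {v : ℝ | ∃ Q : Y → X → ℝ, (∀ y, IsPMF (Q y)) ∧
          v = ∑ x, ∑ y, P x y * Q y x ^ ((α - 1) / α)} /
       sSup {v : ℝ | ∃ Q : X → ℝ, IsPMF Q ∧
          v = ∑ x, (∑ y, P x y) * Q x ^ ((α - 1) / α)})
    = (α / (α - 1)) * Real.log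
        ((∑ y, (∑ x, P x y ^ α) ^ (1 / α)) /
          (∑ x, (∑ y, P x y) ^ α) ^ (1 / α)) := by
  rw [(isGreatest_sum_sum_mul_rpow_channel hP.1 hα).csSup_eq,
    (isGreatest_sum_mul_rpow_isPMF (fun x => Finset.sum_nonneg fun y _ => hP.1 x y) hα).csSup_eq]

/-- the α-leakage (for `1 < α < ∞`)
`L_α(X→Y) = (α/(α-1)) log [ max over channels / max over pmfs ]`
equals the Arimoto mutual information of order α. -/
theorem alpha_leakage_eq_arimoto {X Y : Type} [Fintype X] [Fintype Y]
    [Nonempty X] [Nonempty Y]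
    (P : X → Y → ℝ) (hP : IsJointPMF P) (α : ℝ) (hα : 1 < α) :
    (α / (α - 1)) * Real.log
      (sSup {v : ℝ | ∃ Q : Y → X → ℝ, (∀ y, IsPMF (Q y)) ∧
          v = ∑ x, ∑ y, P x y * Q y x ^ ((α - 1) / α)} /
       sSup {v : ℝ | ∃ Q : X → ℝ, IsPMF Q ∧
          v = ∑ x, (∑ y, P x y) * Q x ^ ((α - 1) / α)})
    = (α / (α - 1)) * Real.log
        ((∑ y, (∑ x, P x y ^ α) ^ (1 / α)) /
          (∑ x, (∑ y, P x y) ^ α) ^ (1 / α)) :=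
  alpha_leakage_eq_arimoto_general P hP α hα
end

section
/- Let 𝒳, 𝒴, 𝒵 be nonempty finite sets, α ∈ (1,∞), W₁ a channel from 𝒳 to 𝒴, W₂ a channel from 𝒴 to 𝒵, and W the composite channel from 𝒳 to 𝒵 given by W(z|x) = ∑_{y∈𝒴} W₁(y|x)·W₂(z|y). Then the maximal α-leakage satisfies both data processing inequalities: sup_Q I_α^S(Q,W) ≤ sup_Q I_α^S(Q,W₁) (supremum over pmfs Q on 𝒳), and sup_{Q on 𝒳} I_α^S(Q,W) ≤ sup_{R on 𝒴} I_α^S(R,W₂). -/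
/-!
Both inequalities are proved for each input distribution `Q` separately, on the sum
`S(Q, W) = ∑_z (∑_x Q(x) W(z|x)^α)^{1/α}`, of which `I_α^S` is an increasing function.
For `W₁`, Minkowski's inequality in the weighted space `L^α(Q)` moves the sum over `y` out of
the norm, and `∑_z W₂(z|y) = 1` removes the last channel. For `W₂`, Jensen's inequality for
`t ↦ t^α` under `W₁(·|x)` bounds `S(Q, W)` by `S(R, W₂)`, where `R = Q W₁` is the output
distribution of `W₁`.
-/

open Real BigOperators

/-- Sibson mutual information of order α of input pmf `Q` and channel `W`. -/
noncomputable def sibsonMI (α : ℝ) {X Y : Type} [Fintype X] [Fintype Y]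
    (Q : X → ℝ) (W : X → Y → ℝ) : ℝ :=
  (α / (α - 1)) * Real.log (∑ y, (∑ x, Q x * W x y ^ α) ^ (1 / α))

/-- Maximal α-leakage of a channel `W`. -/
noncomputable def maxAlphaLeakage (α : ℝ) {X Y : Type} [Fintype X] [Fintype Y]
    (W : X → Y → ℝ) : ℝ :=
  sSup {v : ℝ | ∃ Q : X → ℝ, IsPMF Q ∧ v = sibsonMI α Q W}

open Finset

theorem Real.Lp_sum_le_sum_Lp_of_nonneg {ι X : Type*} (s : Finset ι) (t : Finset X)
    {u : ι → X → ℝ} (hu : ∀ i x, 0 ≤ u i x) {p : ℝ} (hp : 1 ≤ p) :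
    (∑ x ∈ t, (∑ i ∈ s, u i x) ^ p) ^ (1 / p) ≤ ∑ i ∈ s, (∑ x ∈ t, u i x ^ p) ^ (1 / p) := by
  classical
  induction s using Finset.induction_on with
  | empty =>
    have hp0 : p ≠ 0 := by linarith
    simp [zero_rpow hp0, zero_rpow (inv_ne_zero hp0)]
  | @insert a s ha ih =>
    simp only [sum_insert ha]
    calc (∑ x ∈ t, (u a x + ∑ i ∈ s, u i x) ^ p) ^ (1 / p)
        ≤ (∑ x ∈ t, u a x ^ p) ^ (1 / p) + (∑ x ∈ t, (∑ i ∈ s, u i x) ^ p) ^ (1 / p) :=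
          Lp_add_le_of_nonneg t hp (fun x _ => hu a x) fun x _ => sum_nonneg fun i _ => hu i x
      _ ≤ _ := by gcongr

theorem Real.weighted_Lp_sum_le_sum_weighted_Lp {ι X : Type*} [Fintype X] (s : Finset ι)
    {w : X → ℝ} (hw : ∀ x, 0 ≤ w x) {u : ι → X → ℝ} (hu : ∀ i x, 0 ≤ u i x) {p : ℝ}
    (hp : 1 ≤ p) :
    (∑ x, w x * (∑ i ∈ s, u i x) ^ p) ^ (1 / p) ≤
      ∑ i ∈ s, (∑ x, w x * u i x ^ p) ^ (1 / p) := by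
  have absorb : ∀ x {a : ℝ}, 0 ≤ a → w x * a ^ p = (w x ^ (1 / p) * a) ^ p := fun x a ha => by
    rw [mul_rpow (rpow_nonneg (hw x) _) ha, ← rpow_mul (hw x),
      one_div_mul_cancel (by linarith), rpow_one]
  simp only [absorb _ (sum_nonneg fun i _ => hu i _), absorb _ (hu _ _), mul_sum]
  exact Lp_sum_le_sum_Lp_of_nonneg s univ
    (fun i x => mul_nonneg (rpow_nonneg (hw x) _) (hu i x)) hp

namespace IsPMF

variable {X Y : Type} [Fintype X] [Fintype Y]

theorem exists_pos_s11 {Q : X → ℝ} (hQ : IsPMF Q) : ∃ x, 0 < Q x := by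
  obtain ⟨x, -, hx⟩ := (sum_pos_iff_of_nonneg fun x _ => hQ.1 x).1 (hQ.2 ▸ one_pos)
  exact ⟨x, hx⟩

theorem le_one {Q : X → ℝ} (hQ : IsPMF Q) (x : X) : Q x ≤ 1 :=
  hQ.2 ▸ single_le_sum (fun x _ => hQ.1 x) (mem_univ x)

theorem uniform [Nonempty X] : IsPMF (fun _ : X => (Fintype.card X : ℝ)⁻¹) :=
  ⟨fun _ => by positivity, by simp⟩

theorem bind {Q : X → ℝ} (hQ : IsPMF Q) {W : X → Y → ℝ}
    (hW : ∀ x, IsPMF (W x)) : IsPMF (fun y => ∑ x, Q x * W x y) := by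
  refine ⟨fun y => sum_nonneg fun x _ => mul_nonneg (hQ.1 x) ((hW x).1 y), ?_⟩
  rw [sum_comm]
  simp only [← mul_sum, (hW _).2, mul_one, hQ.2]

end IsPMF

noncomputable def sibsonSum (α : ℝ) {X Y : Type} [Fintype X] [Fintype Y]
    (Q : X → ℝ) (W : X → Y → ℝ) : ℝ :=
  ∑ y, (∑ x, Q x * W x y ^ α) ^ (1 / α)

section SibsonSum

variable {X Y Z : Type} [Fintype X] [Fintype Y] [Fintype Z] {α : ℝ} {Q : X → ℝ}

theorem sibsonMI_eq (W : X → Y → ℝ) :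
    sibsonMI α Q W = α / (α - 1) * log (sibsonSum α Q W) := rfl

theorem sibsonSum_pos (hQ : IsPMF Q) {W : X → Y → ℝ} (hW : ∀ x, IsPMF (W x)) :
    0 < sibsonSum α Q W := by
  obtain ⟨x₀, hx₀⟩ := hQ.exists_pos_s11
  obtain ⟨y₀, hy₀⟩ := (hW x₀).exists_pos_s11
  have hterm : ∀ x y, 0 ≤ Q x * W x y ^ α := fun x y =>
    mul_nonneg (hQ.1 x) (rpow_nonneg ((hW x).1 y) α)
  refine sum_pos' (fun y _ => rpow_nonneg (sum_nonneg fun x _ => hterm x y) _)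
    ⟨y₀, mem_univ _, rpow_pos_of_pos ?_ _⟩
  exact sum_pos' (fun x _ => hterm x y₀)
    ⟨x₀, mem_univ _, mul_pos hx₀ (rpow_pos_of_pos hy₀ α)⟩

theorem sibsonSum_le_card (hα : 0 ≤ α) (hQ : IsPMF Q) {W : X → Y → ℝ}
    (hW : ∀ x, IsPMF (W x)) : sibsonSum α Q W ≤ Fintype.card Y := by
  have hinner : ∀ y, ∑ x, Q x * W x y ^ α ≤ 1 := fun y =>
    calc ∑ x, Q x * W x y ^ α ≤ ∑ x, Q x * 1 := by
          gcongr with x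
          · exact hQ.1 x
          · exact rpow_le_one ((hW x).1 y) ((hW x).le_one y) hα
      _ = 1 := by simp [hQ.2]
  calc sibsonSum α Q W ≤ ∑ _y : Y, (1 : ℝ) := sum_le_sum fun y _ =>
        rpow_le_one (sum_nonneg fun x _ => mul_nonneg (hQ.1 x) (rpow_nonneg ((hW x).1 y) α))
          (hinner y) (by positivity)
    _ = Fintype.card Y := by simp

theorem sibsonMI_le_sibsonMI {X' Y' : Type} [Fintype X'] [Fintype Y'] (hα : 1 < α)
    (hQ : IsPMF Q) {W : X → Y → ℝ} (hW : ∀ x, IsPMF (W x)) {R : X' → ℝ} {V : X' → Y' → ℝ}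
    (h : sibsonSum α Q W ≤ sibsonSum α R V) : sibsonMI α Q W ≤ sibsonMI α R V := by
  rw [sibsonMI_eq, sibsonMI_eq]
  exact mul_le_mul_of_nonneg_left (log_le_log (sibsonSum_pos hQ hW) h)
    (div_nonneg (by linarith) (by linarith))

theorem bddAbove_sibsonMI (hα : 1 < α) {W : X → Y → ℝ} (hW : ∀ x, IsPMF (W x)) :
    BddAbove {v : ℝ | ∃ Q : X → ℝ, IsPMF Q ∧ v = sibsonMI α Q W} := by
  refine ⟨α / (α - 1) * log (Fintype.card Y), ?_⟩
  rintro _ ⟨Q, hQ, rfl⟩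
  rw [sibsonMI_eq]
  exact mul_le_mul_of_nonneg_left
    (log_le_log (sibsonSum_pos hQ hW) (sibsonSum_le_card (by linarith) hQ hW))
    (div_nonneg (by linarith) (by linarith))

theorem maxAlphaLeakage_le_of_sibsonSum_le [Nonempty X] {X' Y' : Type} [Fintype X']
    [Fintype Y'] (hα : 1 < α) {W : X → Y → ℝ} (hW : ∀ x, IsPMF (W x)) {V : X' → Y' → ℝ}
    (hV : ∀ x, IsPMF (V x))
    (h : ∀ Q : X → ℝ, IsPMF Q → ∃ R : X' → ℝ, IsPMF R ∧ sibsonSum α Q W ≤ sibsonSum α R V) :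
    maxAlphaLeakage α W ≤ maxAlphaLeakage α V := by
  refine csSup_le ⟨_, _, IsPMF.uniform, rfl⟩ ?_
  rintro _ ⟨Q, hQ, rfl⟩
  obtain ⟨R, hR, hle⟩ := h Q hQ
  exact (sibsonMI_le_sibsonMI hα hQ hW hle).trans (le_csSup (bddAbove_sibsonMI hα hV) ⟨R, hR, rfl⟩)

variable {W₁ : X → Y → ℝ} {W₂ : Y → Z → ℝ}

theorem sibsonSum_comp_le_left (hα : 1 ≤ α) (hQ : IsPMF Q) (hW₁ : ∀ x y, 0 ≤ W₁ x y)
    (hW₂ : ∀ y, IsPMF (W₂ y)) :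
    sibsonSum α Q (fun x z => ∑ y, W₁ x y * W₂ y z) ≤ sibsonSum α Q W₁ := by
  have hα0 : α ≠ 0 := by linarith
  have pull : ∀ y z, (∑ x, Q x * (W₁ x y * W₂ y z) ^ α) ^ (1 / α)
      = W₂ y z * (∑ x, Q x * W₁ x y ^ α) ^ (1 / α) := fun y z => by
    have factor : ∀ x, Q x * (W₁ x y * W₂ y z) ^ α = W₂ y z ^ α * (Q x * W₁ x y ^ α) :=
      fun x => by rw [mul_rpow (hW₁ x y) ((hW₂ y).1 z)]; ring
    rw [sum_congr rfl fun x _ => factor x, ← mul_sum,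
      mul_rpow (rpow_nonneg ((hW₂ y).1 z) _)
        (sum_nonneg fun x _ => mul_nonneg (hQ.1 x) (rpow_nonneg (hW₁ x y) _)),
      ← rpow_mul ((hW₂ y).1 z), mul_one_div_cancel hα0, rpow_one]
  calc sibsonSum α Q (fun x z => ∑ y, W₁ x y * W₂ y z)
      ≤ ∑ z, ∑ y, (∑ x, Q x * (W₁ x y * W₂ y z) ^ α) ^ (1 / α) := sum_le_sum fun z _ =>
        Real.weighted_Lp_sum_le_sum_weighted_Lp univ hQ.1
          (fun y x => mul_nonneg (hW₁ x y) ((hW₂ y).1 z)) hα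
    _ = sibsonSum α Q W₁ := by
        simp only [pull, sibsonSum]
        rw [sum_comm]
        simp only [← sum_mul, (hW₂ _).2, one_mul]

theorem sibsonSum_comp_le_right (hα : 1 ≤ α) (hQ : IsPMF Q) (hW₁ : ∀ x, IsPMF (W₁ x))
    (hW₂ : ∀ y z, 0 ≤ W₂ y z) :
    sibsonSum α Q (fun x z => ∑ y, W₁ x y * W₂ y z) ≤
      sibsonSum α (fun y => ∑ x, Q x * W₁ x y) W₂ := by
  refine sum_le_sum fun z _ => rpow_le_rpow (sum_nonneg fun x _ => mul_nonneg (hQ.1 x)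
    (rpow_nonneg (sum_nonneg fun y _ => mul_nonneg ((hW₁ x).1 y) (hW₂ y z)) _)) ?_
    (by positivity)
  calc ∑ x, Q x * (∑ y, W₁ x y * W₂ y z) ^ α
      ≤ ∑ x, Q x * ∑ y, W₁ x y * W₂ y z ^ α := by
        gcongr with x
        · exact hQ.1 x
        · exact rpow_arith_mean_le_arith_mean_rpow univ (W₁ x) (W₂ · z)
            (fun y _ => (hW₁ x).1 y) (hW₁ x).2 (fun y _ => hW₂ y z) hα
    _ = ∑ y, (∑ x, Q x * W₁ x y) * W₂ y z ^ α := by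
        simp only [mul_sum, sum_mul, mul_assoc]
        exact sum_comm

end SibsonSum

theorem maxAlphaLeakage_data_processing_general {X Y Z : Type}
    [Fintype X] [Fintype Y] [Fintype Z] [Nonempty X]
    (α : ℝ) (hα : 1 < α)
    (W₁ : X → Y → ℝ) (hW₁ : ∀ x, IsPMF (W₁ x))
    (W₂ : Y → Z → ℝ) (hW₂ : ∀ y, IsPMF (W₂ y)) :
    maxAlphaLeakage α (fun x z => ∑ y, W₁ x y * W₂ y z) ≤
        maxAlphaLeakage α W₁ ∧
    maxAlphaLeakage α (fun x z => ∑ y, W₁ x y * W₂ y z) ≤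
        maxAlphaLeakage α W₂ := by
  have hW : ∀ x, IsPMF (fun z => ∑ y, W₁ x y * W₂ y z) := fun x => (hW₁ x).bind hW₂
  exact ⟨maxAlphaLeakage_le_of_sibsonSum_le hα hW hW₁ fun Q hQ =>
      ⟨Q, hQ, sibsonSum_comp_le_left hα.le hQ (fun x => (hW₁ x).1) hW₂⟩,
    maxAlphaLeakage_le_of_sibsonSum_le hα hW hW₂ fun Q hQ =>
      ⟨_, hQ.bind hW₁, sibsonSum_comp_le_right hα.le hQ hW₁ fun y => (hW₂ y).1⟩⟩

/-- data processing inequalities for the maximal α-leakage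
under the Markov chain `X - Y - Z` given by composing channels. -/
theorem maxAlphaLeakage_data_processing {X Y Z : Type}
    [Fintype X] [Fintype Y] [Fintype Z] [Nonempty X] [Nonempty Y] [Nonempty Z]
    (α : ℝ) (hα : 1 < α)
    (W₁ : X → Y → ℝ) (hW₁ : ∀ x, IsPMF (W₁ x))
    (W₂ : Y → Z → ℝ) (hW₂ : ∀ y, IsPMF (W₂ y)) :
    maxAlphaLeakage α (fun x z => ∑ y, W₁ x y * W₂ y z) ≤
        maxAlphaLeakage α W₁ ∧
    maxAlphaLeakage α (fun x z => ∑ y, W₁ x y * W₂ y z) ≤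
        maxAlphaLeakage α W₂ :=
  maxAlphaLeakage_data_processing_general α hα W₁ hW₁ W₂ hW₂
end
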